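/- arXiv:1212.3724 — 2 statements merged into one kernel-verified Lean document; each statement's English description precedes it below -/
import Mathlib

section
/- Propagation of the support for the Landau master equation: Let d ≥ 2, Λ > 0, N ≥ 1, E₀ > 0, and let (F_t^N)_{t≥0} be a weak solution of the Landau master equation with supp F_0^N ⊆ { V ∈ (ℝ^d)^N : (1/N) Σ_{i=1}^N |v_i|² ≤ E₀ }. Then for every t > 0, supp F_t^N ⊆ { V ∈ (ℝ^d)^N : (1/N) Σ_{i=1}^N |v_i|² ≤ E₀ }. -/
open MeasureTheory Real Filter Topology
open scoped ENNReal NNReal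

noncomputable section

abbrev Vd (d : ℕ) : Type := EuclideanSpace ℝ (Fin d)
abbrev Pp (d N : ℕ) : Type := Fin N → Vd d

/-- The Landau matrix `a(z) = Λ (|z|² Id − z zᵀ)` for Maxwellian molecules. -/
def aL (d : ℕ) (Λ : ℝ) (z : Vd d) (α β : Fin d) : ℝ :=
  Λ * (‖z‖ ^ 2 * (if α = β then (1 : ℝ) else 0) - z α * z β)

/-- The Landau vector `b(z) = −Λ(d−1) z` for Maxwellian molecules. -/
def bL (d : ℕ) (Λ : ℝ) (z : Vd d) (α : Fin d) : ℝ :=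
  -(Λ * ((d : ℝ) - 1)) * z α

/-- The coordinate direction `e_{i,α}` in the `N`-particle phase space. -/
def eN (d N : ℕ) (i : Fin N) (α : Fin d) : Pp d N :=
  Pi.single i (EuclideanSpace.single α (1 : ℝ))

/-- Partial derivative `∂_{v_{i,α}} φ`. -/
def pd1 {d N : ℕ} (φ : Pp d N → ℝ) (V : Pp d N) (i : Fin N) (α : Fin d) : ℝ :=
  fderiv ℝ φ V (eN d N i α)

/-- Second partial derivative `∂_{v_{j,β}} ∂_{v_{i,α}} φ`. -/
def pd2 {d N : ℕ} (φ : Pp d N → ℝ) (V : Pp d N) (i : Fin N) (α : Fin d)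
    (j : Fin N) (β : Fin d) : ℝ :=
  fderiv ℝ (fun W => fderiv ℝ φ W (eN d N i α)) V (eN d N j β)

/-- The Landau `N`-particle generator `G_L^N`. -/
def GLN (d N : ℕ) (Λ : ℝ) (φ : Pp d N → ℝ) (V : Pp d N) : ℝ :=
  (N : ℝ)⁻¹ * ∑ i, ∑ j, ∑ α, bL d Λ (V i - V j) α * (pd1 φ V i α - pd1 φ V j α)
    + (2 * (N : ℝ))⁻¹ * ∑ i, ∑ j, ∑ α, ∑ β, aL d Λ (V i - V j) α β *
        (pd2 φ V i α i β + pd2 φ V j α j β - pd2 φ V i α j β - pd2 φ V j α i β)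

/-- One-particle gradient `∂_α φ`. -/
def gr {d : ℕ} (φ : Vd d → ℝ) (v : Vd d) (α : Fin d) : ℝ :=
  fderiv ℝ φ v (EuclideanSpace.single α (1 : ℝ))

/-- One-particle Hessian `∂_{αβ} φ`. -/
def hess {d : ℕ} (φ : Vd d → ℝ) (v : Vd d) (α β : Fin d) : ℝ :=
  fderiv ℝ (fun w => fderiv ℝ φ w (EuclideanSpace.single α (1 : ℝ))) v
    (EuclideanSpace.single β (1 : ℝ))

/-- Integrand of the weak form of the Landau collision operator:
`(1/2) a(v−w) : (∇²φ(v) + ∇²φ(w)) + b(v−w)·(∇φ(v) − ∇φ(w))`. -/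
def landauKer (d : ℕ) (Λ : ℝ) (φ : Vd d → ℝ) (v w : Vd d) : ℝ :=
  (1 / 2) * ∑ α, ∑ β, aL d Λ (v - w) α β * (hess φ v α β + hess φ w α β)
    + ∑ α, bL d Λ (v - w) α * (gr φ v α - gr φ w α)

/-- `C²` functions with bounded derivatives up to order 2. -/
def TestC2 {X : Type} [NormedAddCommGroup X] [NormedSpace ℝ X] (φ : X → ℝ) : Prop :=
  ContDiff ℝ 2 φ ∧ ∀ n : ℕ, n ≤ 2 → ∃ C : ℝ, ∀ x, ‖iteratedFDeriv ℝ n φ x‖ ≤ C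

/-- Moment of order `k` of a measure on `ℝ^d`. -/
def momk (d k : ℕ) (μ : Measure (Vd d)) : ℝ≥0∞ :=
  ∫⁻ v, (‖v‖₊ : ℝ≥0∞) ^ k ∂μ

/-- Weak solution of the spatially homogeneous Landau equation for Maxwellian molecules. -/
def IsLandauSol (d : ℕ) (Λ : ℝ) (f : ℝ → Measure (Vd d)) : Prop :=
  (∀ t, IsProbabilityMeasure (f t)) ∧ (∀ t, momk d 2 (f t) < ⊤) ∧
    ∀ φ : Vd d → ℝ, TestC2 φ → ∀ t : ℝ, 0 ≤ t →
      ∫ v, φ v ∂(f t) = (∫ v, φ v ∂(f 0)) +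
        ∫ s in Set.Ioc (0 : ℝ) t, ∫ v, ∫ w, landauKer d Λ φ v w ∂(f s) ∂(f s)

/-- Conservation of momentum and energy. -/
def Conserves (d : ℕ) (f : ℝ → Measure (Vd d)) : Prop :=
  (∀ t : ℝ, 0 ≤ t → (∫ v, v ∂(f t)) = ∫ v, v ∂(f 0)) ∧
    ∀ t : ℝ, 0 ≤ t → momk d 2 (f t) = momk d 2 (f 0)

/-- Weak solution of the Landau master equation. -/
def IsMasterSol (d N : ℕ) (Λ : ℝ) (F : ℝ → Measure (Pp d N)) : Prop :=
  (∀ t, IsProbabilityMeasure (F t)) ∧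
    (∀ t, (∫⁻ V, ∑ i, (‖V i‖₊ : ℝ≥0∞) ^ 2 ∂(F t)) < ⊤) ∧
    ∀ φ : Pp d N → ℝ, TestC2 φ → ∀ t : ℝ, 0 ≤ t →
      ∫ V, φ V ∂(F t) = (∫ V, φ V ∂(F 0)) +
        ∫ s in Set.Ioc (0 : ℝ) t, ∫ V, GLN d N Λ φ V ∂(F s)

/-- Fourier transform of a measure, `μ̂(ξ) = ∫ e^{−i ξ·v} μ(dv)`. -/
def ftM (d : ℕ) (μ : Measure (Vd d)) (ξ : Vd d) : ℂ :=
  ∫ v, Complex.exp (-(Complex.I) * ((inner ℝ ξ v : ℝ) : ℂ)) ∂μ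

/-- Fourier-based distance `|μ − ν|_s`, with values in `[0,∞]`. -/
def fdist (d : ℕ) (s : ℝ) (μ ν : Measure (Vd d)) : ℝ≥0∞ :=
  ⨆ (ξ : Vd d) (_ : ξ ≠ 0), ENNReal.ofReal (‖ftM d μ ξ - ftM d ν ξ‖ / ‖ξ‖ ^ s)

open scoped Classical in
/-- A finite measure, seen as a signed measure. -/
def toSgn {X : Type} [MeasurableSpace X] (μ : Measure X) : SignedMeasure X :=
  if h : IsFiniteMeasure μ then @Measure.toSignedMeasure X _ μ h else 0

/-- Integral of a function against a signed measure. -/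
def sInt {X : Type} [MeasurableSpace X] (μ : SignedMeasure X) (f : X → ℝ) : ℝ :=
  (∫ x, f x ∂μ.toJordanDecomposition.posPart) - ∫ x, f x ∂μ.toJordanDecomposition.negPart

/-- Fourier transform of a signed measure. -/
def ftS (d : ℕ) (μ : SignedMeasure (Vd d)) (ξ : Vd d) : ℂ :=
  ftM d μ.toJordanDecomposition.posPart ξ - ftM d μ.toJordanDecomposition.negPart ξ

/-- Fourier-based norm `|μ|_s` of a signed measure, with values in `[0,∞]`. -/
def fdistS (d : ℕ) (s : ℝ) (μ : SignedMeasure (Vd d)) : ℝ≥0∞ :=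
  ⨆ (ξ : Vd d) (_ : ξ ≠ 0), ENNReal.ofReal (‖ftS d μ ξ‖ / ‖ξ‖ ^ s)

/-- Moment of order `k` of a signed measure (against its total variation). -/
def momkS (d k : ℕ) (μ : SignedMeasure (Vd d)) : ℝ≥0∞ :=
  ∫⁻ v, (‖v‖₊ : ℝ≥0∞) ^ k ∂μ.totalVariation

/-- Symmetrized Landau bilinear form `⟨Q(μ,ν), φ⟩`. -/
def Qform (d : ℕ) (Λ : ℝ) (μ ν : SignedMeasure (Vd d)) (φ : Vd d → ℝ) : ℝ :=
  (1 / 2) * (sInt μ (fun v => sInt ν (fun w => landauKer d Λ φ v w))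
    + sInt ν (fun v => sInt μ (fun w => landauKer d Λ φ v w)))

/-- Weak solution of the linearized equation `∂ₜ h = 2Q(f,h)`. -/
def IsLinSol (d : ℕ) (Λ : ℝ) (f : ℝ → Measure (Vd d)) (h : ℝ → SignedMeasure (Vd d)) : Prop :=
  ∀ φ : Vd d → ℝ, TestC2 φ → ∀ t : ℝ, 0 ≤ t →
    sInt (h t) φ = sInt (h 0) φ + ∫ s in Set.Ioc (0 : ℝ) t, 2 * Qform d Λ (toSgn (f s)) (h s) φ

/-- Weak solution of the second-order equation `∂ₜ u = 2Q(f,u) + Q(h,h)`. -/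
def IsLin2Sol (d : ℕ) (Λ : ℝ) (f : ℝ → Measure (Vd d)) (h u : ℝ → SignedMeasure (Vd d)) : Prop :=
  ∀ φ : Vd d → ℝ, TestC2 φ → ∀ t : ℝ, 0 ≤ t →
    sInt (u t) φ = sInt (u 0) φ +
      ∫ s in Set.Ioc (0 : ℝ) t,
        (2 * Qform d Λ (toSgn (f s)) (u s) φ + Qform d Λ (h s) (h s) φ)

/-- Moments of order `k` bounded locally uniformly in time. -/
def LocBddMom (d k : ℕ) (h : ℝ → SignedMeasure (Vd d)) : Prop :=
  ∀ T : ℝ, 0 < T → ∃ C : ℝ, ∀ t ∈ Set.Icc (0 : ℝ) T, momkS d k (h t) ≤ ENNReal.ofReal C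

/-- Quadratic Wasserstein distance, with values in `[0,∞]`. -/
def W2d (d : ℕ) (μ ν : Measure (Vd d)) : ℝ≥0∞ :=
  ⨅ (pl : Measure (Vd d × Vd d)) (_ : pl.map Prod.fst = μ) (_ : pl.map Prod.snd = ν),
    (∫⁻ p, (‖p.1 - p.2‖₊ : ℝ≥0∞) ^ 2 ∂pl) ^ ((1 : ℝ) / 2)

/-- Wasserstein-1 distance on the `N`-particle space, with cost `∑ᵢ |vᵢ − wᵢ|`. -/
def W1N (d N : ℕ) (μ ν : Measure (Pp d N)) : ℝ≥0∞ :=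
  ⨅ (pl : Measure (Pp d N × Pp d N)) (_ : pl.map Prod.fst = μ) (_ : pl.map Prod.snd = ν),
    ∫⁻ p, ∑ i, (‖p.1 i - p.2 i‖₊ : ℝ≥0∞) ∂pl

/-- Empirical measure of `V = (v₁, …, v_N)`. -/
def empMeas (d N : ℕ) (V : Pp d N) : Measure (Vd d) :=
  ((N : ℝ≥0∞))⁻¹ • ∑ i, Measure.dirac (V i)

/-- Boltzmann sphere `S^N(En)` (with zero mean momentum). -/
def sphereSet (d N : ℕ) (En : ℝ) : Set (Pp d N) :=
  {V | (N : ℝ)⁻¹ * ∑ i, ‖V i‖ ^ 2 = En ∧ (N : ℝ)⁻¹ • (∑ i, V i) = 0}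

def flatten (d N : ℕ) (W : EuclideanSpace ℝ (Fin N × Fin d)) : Pp d N :=
  fun i => (WithLp.toLp 2 (fun α => W (i, α)) : EuclideanSpace ℝ (Fin d))

def gammaRaw (d N : ℕ) (En : ℝ) : Measure (Pp d N) :=
  ((μH[(d : ℝ) * N - d - 1] : Measure (EuclideanSpace ℝ (Fin N × Fin d))).restrict
      (flatten d N ⁻¹' sphereSet d N En)).map (flatten d N)

/-- The uniform probability measure on the Boltzmann sphere: the normalized
`(dN − d − 1)`-dimensional (Euclidean) Hausdorff measure. -/
def gammaN (d N : ℕ) (En : ℝ) : Measure (Pp d N) :=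
  (gammaRaw d N En Set.univ)⁻¹ • gammaRaw d N En

/-- The tensor product of a density `ρ`, conditioned to the Boltzmann sphere. -/
def condTensor (d N : ℕ) (En : ℝ) (ρ : Vd d → ℝ≥0∞) : Measure (Pp d N) :=
  (∫⁻ V, ∏ i, ρ (V i) ∂gammaN d N En)⁻¹ •
    (gammaN d N En).withDensity fun V => ∏ i, ρ (V i)

/-- The centered Gaussian probability measure on `ℝ^d` with energy `En`. -/
def gaussE (d : ℕ) (En : ℝ) : Measure (Vd d) :=
  volume.withDensity fun v =>
    ENNReal.ofReal ((2 * π * (En / d)) ^ (-(d : ℝ) / 2) * Real.exp (-‖v‖ ^ 2 / (2 * (En / d))))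

open scoped Classical in
/-- Relative entropy `H(μ|ν) ∈ [0,∞]` (equal to `+∞` if `μ` is not absolutely
continuous with respect to `ν`). -/
def relEnt {X : Type} [MeasurableSpace X] (μ ν : Measure X) : ℝ≥0∞ :=
  if μ ≪ ν then
    ∫⁻ x, ENNReal.ofReal ((μ.rnDeriv ν x).toReal * Real.log ((μ.rnDeriv ν x).toReal)
      - (μ.rnDeriv ν x).toReal + 1) ∂ν
  else ⊤

/-- Exchangeable (symmetric) measure on the `N`-particle space. -/
def IsSymmM (d N : ℕ) (μ : Measure (Pp d N)) : Prop :=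
  ∀ σ : Equiv.Perm (Fin N), μ.map (fun V i => V (σ i)) = μ

/-- Kac chaoticity: all marginals converge weakly to tensor powers. -/
def Chaotic (d : ℕ) (F : (N : ℕ) → Measure (Pp d N)) (f : Measure (Vd d)) : Prop :=
  ∀ (ℓ : ℕ) (φ : (Fin ℓ → Vd d) → ℝ), Continuous φ → (∃ B, ∀ x, |φ x| ≤ B) →
    Tendsto (fun N => if h : ℓ ≤ N then ∫ V, φ (fun k => V (Fin.castLE h k)) ∂(F N) else 0)
      atTop (𝓝 (∫ x, φ x ∂Measure.pi fun _ : Fin ℓ => f))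

/-- Fourier transform of a function, `φ̂(ξ) = ∫ e^{−i ξ·v} φ(v) dv`. -/
def ftF (d : ℕ) (φ : Vd d → ℝ) (ξ : Vd d) : ℂ :=
  ∫ v, Complex.exp (-(Complex.I) * ((inner ℝ ξ v : ℝ) : ℂ)) * (φ v : ℂ)

/-- The norm `‖φ‖_F = ∫ (1+|ξ|⁶)|φ̂(ξ)| dξ`. -/
def Fnorm (d : ℕ) (φ : Vd d → ℝ) : ℝ :=
  ∫ ξ, (1 + ‖ξ‖ ^ 6) * ‖ftF d φ ξ‖

/-- Sup norm. -/
def supNorm {X : Type} (φ : X → ℝ) : ℝ := ⨆ x, |φ x|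

/-- Lipschitz seminorm (i.e. `‖∇φ‖_{L^∞}`). -/
def lipSemi {X : Type} [NormedAddCommGroup X] (φ : X → ℝ) : ℝ :=
  sInf {K : ℝ | 0 ≤ K ∧ ∀ x y, |φ x - φ y| ≤ K * ‖x - y‖}

/-- `‖φ₁ ⊗ ⋯ ⊗ φ_ℓ‖_{F^{⊗3} ⊗ (L^∞)^{ℓ−3}}`. -/
def Fnorm3 (d ℓ : ℕ) (φs : Fin ℓ → Vd d → ℝ) : ℝ :=
  sSup {x : ℝ | ∃ i₁ i₂ i₃ : Fin ℓ, i₁ ≠ i₂ ∧ i₁ ≠ i₃ ∧ i₂ ≠ i₃ ∧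
    x = Fnorm d (φs i₁) * Fnorm d (φs i₂) * Fnorm d (φs i₃) *
      ∏ k ∈ ({i₁, i₂, i₃}ᶜ : Finset (Fin ℓ)), supNorm (φs k)}

/-- `‖φ₁ ⊗ ⋯ ⊗ φ_ℓ‖_{W^{1,∞} ⊗ (L^∞)^{ℓ−1}}`. -/
def W1infNorm (d ℓ : ℕ) (φs : Fin ℓ → Vd d → ℝ) : ℝ :=
  sSup {x : ℝ | ∃ i : Fin ℓ,
    x = (supNorm (φs i) + lipSemi (φs i)) * ∏ k ∈ ({i}ᶜ : Finset (Fin ℓ)), supNorm (φs k)}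

/-- Post-collisional configuration `V'_{ij}` with collision direction `σ`. -/
def collide (d N : ℕ) (V : Pp d N) (i j : Fin N) (σ : Vd d) : Pp d N :=
  Function.update (Function.update V i
    ((1 / 2 : ℝ) • (V i + V j) + (‖V i - V j‖ / 2) • σ)) j
    ((1 / 2 : ℝ) • (V i + V j) - (‖V i - V j‖ / 2) • σ)


/-! The generator annihilates every function `g (∑ᵢ |vᵢ|²)` of the kinetic energy. For such a
function and `z = vᵢ - vⱼ`, the drift contributes `b(z) · 2g' z = -2g' Λ (d-1) |z|²` per pair,
and the diffusion `a(z) : (4g'' z zᵀ + 4g' Id) = 4g' tr a(z) = 4g' Λ (d-1) |z|²`, the `g''` part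
vanishing because `a(z) z = 0`; with the prefactors `1/N` and `1/(2N)` the two cancel.
Taking `g` smooth, zero up to energy `N E₀`, positive beyond and constant for large energies
gives an admissible test function whose integral is conserved. It vanishes at time `0`, hence at
every time, and being positive off the energy sublevel set it forces `F_t` to be carried by it. -/

section Maxwellian

variable (d : ℕ) (Λ : ℝ) (z : Vd d)

lemma sum_bL_mul_self : ∑ α, bL d Λ z α * z α = -(Λ * ((d : ℝ) - 1)) * ‖z‖ ^ 2 := by
  simp only [EuclideanSpace.real_norm_sq_eq, bL, Finset.mul_sum]
  exact Finset.sum_congr rfl fun α _ => by ring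

lemma sum_aL_mul_self (α : Fin d) : ∑ β, aL d Λ z α β * z β = 0 := by
  simp only [aL, mul_sub, sub_mul, Finset.sum_sub_distrib, mul_ite, mul_one, mul_zero, ite_mul,
    zero_mul, Finset.sum_ite_eq, Finset.mem_univ, if_true, EuclideanSpace.real_norm_sq_eq,
    Finset.mul_sum, Finset.sum_mul]
  exact sub_eq_zero.2 (Finset.sum_congr rfl fun β _ => by ring)

lemma sum_aL_diag : ∑ α, aL d Λ z α α = Λ * ((d : ℝ) - 1) * ‖z‖ ^ 2 := by
  simp only [aL, if_true, mul_one, mul_sub, Finset.sum_sub_distrib, Finset.sum_const,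
    Finset.card_univ, Fintype.card_fin, nsmul_eq_mul, ← Finset.mul_sum, ← sq,
    ← EuclideanSpace.real_norm_sq_eq]
  ring

end Maxwellian

lemma testC2_of_hasCompactSupport_sub_const {X : Type} [NormedAddCommGroup X] [NormedSpace ℝ X]
    {φ : X → ℝ} {c : ℝ} (hφ : ContDiff ℝ 2 φ) (hc : HasCompactSupport fun x => φ x - c) :
    TestC2 φ := by
  refine ⟨hφ, fun n hn => ?_⟩
  have hψ : ContDiff ℝ 2 fun x => φ x - c := hφ.sub contDiff_const
  obtain ⟨C, hC⟩ := (hψ.continuous_iteratedFDeriv (mod_cast hn)).bounded_above_of_compact_support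
    (hc.iteratedFDeriv n)
  rcases n.eq_zero_or_pos with rfl | hn0
  · refine ⟨C + |c|, fun x => ?_⟩
    have hx := hC x
    simp only [norm_iteratedFDeriv_zero, Real.norm_eq_abs] at hx ⊢
    linarith [abs_sub_abs_le_abs_sub (φ x) c]
  · refine ⟨C, fun x => ?_⟩
    have hx := hC x
    rwa [fun_iteratedFDeriv_sub_apply (hφ.of_le (mod_cast hn)).contDiffAt contDiffAt_const,
      iteratedFDeriv_const_of_ne hn0.ne', Pi.zero_apply, sub_zero] at hx

lemma TestC2.integrable {X : Type} [NormedAddCommGroup X] [NormedSpace ℝ X] [MeasurableSpace X]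
    [OpensMeasurableSpace X] {φ : X → ℝ} (hφ : TestC2 φ) (μ : Measure X) [IsFiniteMeasure μ] :
    Integrable φ μ := by
  obtain ⟨C, hC⟩ := hφ.2 0 (Nat.zero_le _)
  exact .of_bound hφ.1.continuous.aestronglyMeasurable C <| .of_forall fun x => by
    simpa using hC x

lemma integral_eq_zero_iff_measure_compl_eq_zero {X : Type} [MeasurableSpace X] {μ : Measure X}
    {φ : X → ℝ} {S : Set X} (hφ : Integrable φ μ) (hφ_nonneg : 0 ≤ φ)
    (hφ_zero : ∀ x, φ x = 0 ↔ x ∈ S) : ∫ x, φ x ∂μ = 0 ↔ μ Sᶜ = 0 := by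
  rw [integral_eq_zero_iff_of_nonneg hφ_nonneg hφ, Filter.EventuallyEq, ae_iff]
  simp only [Pi.zero_apply, hφ_zero]
  rfl

def kineticEnergy {d N : ℕ} (V : Pp d N) : ℝ := ∑ i, ‖V i‖ ^ 2

lemma contDiff_kineticEnergy {d N : ℕ} {n : WithTop ℕ∞} :
    ContDiff ℝ n (kineticEnergy : Pp d N → ℝ) :=
  ContDiff.sum fun i _ => (contDiff_apply ℝ (Vd d) i).norm_sq ℝ

lemma isCompact_kineticEnergy_le (d N : ℕ) (R : ℝ) :
    IsCompact {V : Pp d N | kineticEnergy V ≤ R} := by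
  refine Metric.isCompact_of_isClosed_isBounded
    (isClosed_le (contDiff_kineticEnergy (n := 0)).continuous continuous_const) ?_
  refine (Metric.isBounded_closedBall (x := 0) (r := √R)).subset fun V hV => ?_
  rw [mem_closedBall_zero_iff, pi_norm_le_iff_of_nonneg (Real.sqrt_nonneg _)]
  exact fun i => Real.le_sqrt_of_sq_le <| (Finset.single_le_sum (f := fun j => ‖V j‖ ^ 2)
    (fun j _ => sq_nonneg _) (Finset.mem_univ i)).trans hV

lemma testC2_comp_kineticEnergy {d N : ℕ} {g : ℝ → ℝ} {R c : ℝ} (hg : ContDiff ℝ 2 g)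
    (hgc : ∀ x, R ≤ x → g x = c) : TestC2 (g ∘ kineticEnergy : Pp d N → ℝ) :=
  testC2_of_hasCompactSupport_sub_const (c := c) (hg.comp contDiff_kineticEnergy) <|
    HasCompactSupport.intro (isCompact_kineticEnergy_le d N R) fun V hV => by
      simp [hgc _ (le_of_not_ge hV)]

lemma hasFDerivAt_kineticEnergy {d N : ℕ} (V : Pp d N) :
    HasFDerivAt kineticEnergy (∑ i, 2 • (innerSL ℝ (V i)).comp (ContinuousLinearMap.proj i)) V :=
  HasFDerivAt.fun_sum fun i _ => (hasFDerivAt_apply i V).norm_sq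

lemma fderiv_comp_kineticEnergy_eN {d N : ℕ} {h : ℝ → ℝ} (hh : Differentiable ℝ h) (V : Pp d N)
    (j : Fin N) (β : Fin d) :
    fderiv ℝ (h ∘ kineticEnergy) V (eN d N j β) = deriv h (kineticEnergy V) * (2 * V j β) := by
  rw [((hh _).hasDerivAt.comp_hasFDerivAt V (hasFDerivAt_kineticEnergy V)).fderiv]
  simp [eN, Pi.single_apply, apply_ite, EuclideanSpace.inner_single_right]

section EnergyFunctions

variable {d N : ℕ} {g : ℝ → ℝ} (V : Pp d N) (i : Fin N) (α : Fin d)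

lemma pd1_comp_kineticEnergy (hg : Differentiable ℝ g) :
    pd1 (g ∘ kineticEnergy) V i α = deriv g (kineticEnergy V) * (2 * V i α) :=
  fderiv_comp_kineticEnergy_eN hg V i α

lemma pd2_comp_kineticEnergy (hg : ContDiff ℝ 2 g) (j : Fin N) (β : Fin d) :
    pd2 (g ∘ kineticEnergy) V i α j β
      = deriv (deriv g) (kineticEnergy V) * (2 * V j β) * (2 * V i α)
        + if i = j ∧ α = β then 2 * deriv g (kineticEnergy V) else 0 := by
  have hg1 : Differentiable ℝ g := hg.differentiable (by norm_num)
  have hg2 : Differentiable ℝ (deriv g) :=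
    ((contDiff_succ_iff_deriv (n := 1)).1 hg).2.2.differentiable one_ne_zero
  let coord : Pp d N →L[ℝ] ℝ :=
    (EuclideanSpace.proj α).comp (ContinuousLinearMap.proj (R := ℝ) (φ := fun _ => Vd d) i)
  have hcoord : HasFDerivAt (fun W : Pp d N => 2 * W i α) ((2 : ℝ) • coord) V :=
    coord.hasFDerivAt.const_mul (2 : ℝ)
  have hpd1 : (fun W => fderiv ℝ (g ∘ kineticEnergy) W (eN d N i α))
      = fun W => (deriv g ∘ kineticEnergy) W * (2 * W i α) :=
    funext fun W => fderiv_comp_kineticEnergy_eN hg1 W i α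
  have hderiv := (hg2 _).hasDerivAt.comp_hasFDerivAt V (hasFDerivAt_kineticEnergy V)
  unfold pd2
  rw [hpd1, (hderiv.fun_mul hcoord).fderiv]
  simp [coord, eN, Pi.single_apply, apply_ite, EuclideanSpace.inner_single_right]
  split_ifs <;> simp_all <;> ring

variable (Λ : ℝ)

lemma GLN_comp_kineticEnergy (hg : ContDiff ℝ 2 g) : GLN d N Λ (g ∘ kineticEnergy) V = 0 := by
  have hg1 : Differentiable ℝ g := hg.differentiable (by norm_num)
  set c := deriv g (kineticEnergy V)
  set c₂ := deriv (deriv g) (kineticEnergy V)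
  have hb : ∀ i j, ∑ α, bL d Λ (V i - V j) α
        * (pd1 (g ∘ kineticEnergy) V i α - pd1 (g ∘ kineticEnergy) V j α)
      = -(2 * c) * (Λ * ((d : ℝ) - 1) * ‖V i - V j‖ ^ 2) := by
    intro i j
    calc _ = 2 * c * ∑ α, bL d Λ (V i - V j) α * (V i - V j) α := by
          simp only [pd1_comp_kineticEnergy _ _ _ hg1, Finset.mul_sum, PiLp.sub_apply]
          exact Finset.sum_congr rfl fun α _ => by ring
      _ = _ := by rw [sum_bL_mul_self]; ring
  have ha : ∀ i j, ∑ α, ∑ β, aL d Λ (V i - V j) α β *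
        (pd2 (g ∘ kineticEnergy) V i α i β + pd2 (g ∘ kineticEnergy) V j α j β
          - pd2 (g ∘ kineticEnergy) V i α j β - pd2 (g ∘ kineticEnergy) V j α i β)
      = 4 * c * (Λ * ((d : ℝ) - 1) * ‖V i - V j‖ ^ 2) := by
    intro i j
    rcases eq_or_ne i j with rfl | hij
    · simp
    have hpd2 : ∀ α β, pd2 (g ∘ kineticEnergy) V i α i β + pd2 (g ∘ kineticEnergy) V j α j β
          - pd2 (g ∘ kineticEnergy) V i α j β - pd2 (g ∘ kineticEnergy) V j α i β
        = 4 * c₂ * ((V i - V j) α * (V i - V j) β) + 4 * c * (if α = β then 1 else 0) := by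
      intro α β
      simp only [pd2_comp_kineticEnergy _ _ _ hg, hij, hij.symm, true_and, false_and, if_false,
        PiLp.sub_apply]
      split_ifs <;> ring
    calc _ = 4 * c₂ * ∑ α, (V i - V j) α * ∑ β, aL d Λ (V i - V j) α β * (V i - V j) β
          + 4 * c * ∑ α, aL d Λ (V i - V j) α α := by
          simp only [hpd2, mul_add, Finset.sum_add_distrib, Finset.mul_sum, mul_ite, mul_one,
            mul_zero, Finset.sum_ite_eq, Finset.mem_univ, if_true]
          congr 1
          · exact Finset.sum_congr rfl fun α _ => Finset.sum_congr rfl fun β _ => by ring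
          · exact Finset.sum_congr rfl fun α _ => by ring
      _ = _ := by simp only [sum_aL_mul_self, mul_zero, Finset.sum_const_zero, sum_aL_diag]; ring
  unfold GLN
  simp only [hb, ha, ← Finset.mul_sum]
  ring

end EnergyFunctions

lemma IsMasterSol.integral_eq_of_GLN_eq_zero {d N : ℕ} {Λ : ℝ} {F : ℝ → Measure (Pp d N)}
    (hF : IsMasterSol d N Λ F) {φ : Pp d N → ℝ} (hφ : TestC2 φ) (hG : ∀ V, GLN d N Λ φ V = 0)
    {t : ℝ} (ht : 0 ≤ t) : ∫ V, φ V ∂(F t) = ∫ V, φ V ∂(F 0) := by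
  simp [hF.2.2 φ hφ t ht, hG]

theorem landau_master_support_propagation_general
    (d N : ℕ) (hN : 1 ≤ N) (Λ E₀ : ℝ)
    (F : ℝ → Measure (Pp d N)) (hF : IsMasterSol d N Λ F)
    (h0 : (F 0) {V : Pp d N | (N : ℝ)⁻¹ * ∑ i, ‖V i‖ ^ 2 ≤ E₀}ᶜ = 0) :
    ∀ t : ℝ, 0 < t → (F t) {V : Pp d N | (N : ℝ)⁻¹ * ∑ i, ‖V i‖ ^ 2 ≤ E₀}ᶜ = 0 := by
  intro t ht
  set S := {V : Pp d N | (N : ℝ)⁻¹ * ∑ i, ‖V i‖ ^ 2 ≤ E₀}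
  let g : ℝ → ℝ := fun x => Real.smoothTransition ((N : ℝ)⁻¹ * x - E₀)
  have hg : ContDiff ℝ 2 g :=
    Real.smoothTransition.contDiff.comp ((contDiff_const.mul contDiff_id).sub contDiff_const)
  have hg_one : ∀ x, N * (1 + E₀) ≤ x → g x = 1 := fun x hx => by
    refine Real.smoothTransition.one_of_one_le ?_
    rw [le_sub_iff_add_le, le_inv_mul_iff₀ (by exact_mod_cast hN)]
    linarith
  let φ : Pp d N → ℝ := g ∘ kineticEnergy
  have hφ : TestC2 φ := testC2_comp_kineticEnergy hg hg_one
  have hφ_zero : ∀ V, φ V = 0 ↔ V ∈ S := fun V => by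
    simp [φ, g, S, kineticEnergy, Real.smoothTransition.zero_iff_nonpos]
  have hφ_nonneg : 0 ≤ φ := fun V => Real.smoothTransition.nonneg _
  have := hF.1 t
  have := hF.1 0
  rw [← integral_eq_zero_iff_measure_compl_eq_zero (hφ.integrable _) hφ_nonneg hφ_zero,
    hF.integral_eq_of_GLN_eq_zero hφ (GLN_comp_kineticEnergy · Λ hg) ht.le,
    integral_eq_zero_iff_measure_compl_eq_zero (hφ.integrable _) hφ_nonneg hφ_zero]
  exact h0

/-- Propagation of the support for the Landau master equation. -/
theorem landau_master_support_propagation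
    (d N : ℕ) (hd : 2 ≤ d) (hN : 1 ≤ N) (Λ E₀ : ℝ) (hΛ : 0 < Λ) (hE₀ : 0 < E₀)
    (F : ℝ → Measure (Pp d N)) (hF : IsMasterSol d N Λ F)
    (h0 : (F 0) {V : Pp d N | (N : ℝ)⁻¹ * ∑ i, ‖V i‖ ^ 2 ≤ E₀}ᶜ = 0) :
    ∀ t : ℝ, 0 < t → (F t) {V : Pp d N | (N : ℝ)⁻¹ * ∑ i, ‖V i‖ ^ 2 ≤ E₀}ᶜ = 0 :=
  landau_master_support_propagation_general d N hN Λ E₀ F hF h0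
end
end

section
/- Second-order remainder bound for Bobylev-type combinations of characteristic functions: For every d ≥ 2 and M > 0 there exists C > 0, depending only on d and M, with the following property. Let f, g be Borel probability measures on ℝ^d with ∫ v f(dv) = ∫ v g(dv) and ∫ |v|² f(dv) + ∫ |v|² g(dv) ≤ M. Set D(ξ) = f̂(ξ) − ĝ(ξ) and S(ξ) = f̂(ξ) + ĝ(ξ), where f̂(ξ) = ∫ e^{−i ξ·v} f(dv). Then for every ξ ∈ ℝ^d \ {0} and every unit vector σ ∈ S^{d−1}, writing ξ⁺ = (ξ + |ξ|σ)/2, ξ⁻ = (ξ − |ξ|σ)/2 and cos θ = σ·ξ/|ξ|, one has |D(ξ⁺) S(ξ⁻) + D(ξ⁻) S(ξ⁺) − 2 D(ξ)| ≤ C |ξ|² (1 − cos θ)^{1/2}. -/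
open MeasureTheory Real Filter Topology
open scoped ENNReal NNReal

noncomputable section

/-! Put `p = ξ⁺`, `q = ξ⁻`, so that `p + q = ξ`. Since `D(p)S(q) + D(q)S(p) = 2(f̂(p)f̂(q) − ĝ(p)ĝ(q))`,
the Bobylev combination is `2(f̂(p)f̂(q) − f̂(ξ)) − 2(ĝ(p)ĝ(q) − ĝ(ξ))`, and each measure can be
treated separately. Symmetrizing in the two variables,
`2(μ̂(p)μ̂(q) − μ̂(p+q)) = ∬ (e^{−ip·v} − e^{−ip·w})(e^{−iq·w} − e^{−iq·v}) μ(dv)μ(dw)`,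
whose integrand is at most `|p||q||v − w|²`; hence `|μ̂(p)μ̂(q) − μ̂(p+q)| ≤ 2|p||q|∫|v|² dμ`.
Finally `|p| ≤ |ξ|` and `|q|² = |ξ|²(1 − cos θ)/2`. -/

section CharFun

open Complex
open scoped InnerProductSpace

variable {E : Type*} [NormedAddCommGroup E] [InnerProductSpace ℝ E]

lemma exp_inner_mul_I_mul_exp_inner_mul_I (x s t : E) :
    exp (⟪x, s⟫_ℝ * I) * exp (⟪x, t⟫_ℝ * I) = exp (⟪x, s + t⟫_ℝ * I) := by
  rw [← Complex.exp_add, inner_add_right, ofReal_add, add_mul]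

lemma norm_exp_inner_mul_I_sub_le (x y t : E) :
    ‖exp (⟪x, t⟫_ℝ * I) - exp (⟪y, t⟫_ℝ * I)‖ ≤ ‖t‖ * ‖x - y‖ := by
  have hsplit : exp (⟪x, t⟫_ℝ * I) - exp (⟪y, t⟫_ℝ * I)
      = exp (⟪y, t⟫_ℝ * I) * (exp (I * ⟪x - y, t⟫_ℝ) - 1) := by
    rw [mul_sub, mul_one, ← Complex.exp_add, inner_sub_left, ofReal_sub]; ring_nf
  rw [hsplit, norm_mul, norm_exp_ofReal_mul_I, one_mul]
  calc _ ≤ ‖⟪x - y, t⟫_ℝ‖ := Real.norm_exp_I_mul_ofReal_sub_one_le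
    _ ≤ ‖t‖ * ‖x - y‖ := by rw [Real.norm_eq_abs, mul_comm]; exact abs_real_inner_le_norm _ _

variable [MeasurableSpace E] [OpensMeasurableSpace E] {μ : Measure E}

lemma integrable_exp_inner_mul_I (μ : Measure E) [IsFiniteMeasure μ] (t : E) :
    Integrable (fun x => exp (⟪x, t⟫_ℝ * I)) μ :=
  Integrable.of_bound (by fun_prop) 1 (.of_forall fun x => (norm_exp_ofReal_mul_I _).le)

variable [IsProbabilityMeasure μ]

lemma integral_exp_inner_mul_I_sub_mul_sub (s t v : E) :
    ∫ w, (exp (⟪v, s⟫_ℝ * I) - exp (⟪w, s⟫_ℝ * I)) * (exp (⟪w, t⟫_ℝ * I) - exp (⟪v, t⟫_ℝ * I)) ∂μ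
      = exp (⟪v, s⟫_ℝ * I) * charFun μ t - exp (⟪v, s + t⟫_ℝ * I) - charFun μ (s + t)
        + exp (⟪v, t⟫_ℝ * I) * charFun μ s := by
  have hexpand : ∀ w, (exp (⟪v, s⟫_ℝ * I) - exp (⟪w, s⟫_ℝ * I))
        * (exp (⟪w, t⟫_ℝ * I) - exp (⟪v, t⟫_ℝ * I))
      = exp (⟪v, s⟫_ℝ * I) * exp (⟪w, t⟫_ℝ * I) - exp (⟪v, s + t⟫_ℝ * I)
        - exp (⟪w, s + t⟫_ℝ * I) + exp (⟪v, t⟫_ℝ * I) * exp (⟪w, s⟫_ℝ * I) := by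
    intro w
    rw [← exp_inner_mul_I_mul_exp_inner_mul_I v, ← exp_inner_mul_I_mul_exp_inner_mul_I w]
    ring
  have hint := integrable_exp_inner_mul_I μ
  simp_rw [hexpand]
  rw [integral_add (by fun_prop) (by fun_prop), integral_sub (by fun_prop) (by fun_prop),
    integral_sub (by fun_prop) (by fun_prop), integral_const_mul, integral_const_mul, integral_const]
  simp [charFun_apply]

lemma integral_integral_exp_inner_mul_I_sub_mul_sub (s t : E) :
    ∫ v, ∫ w, (exp (⟪v, s⟫_ℝ * I) - exp (⟪w, s⟫_ℝ * I))
        * (exp (⟪w, t⟫_ℝ * I) - exp (⟪v, t⟫_ℝ * I)) ∂μ ∂μ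
      = 2 * (charFun μ s * charFun μ t - charFun μ (s + t)) := by
  have hint := integrable_exp_inner_mul_I μ
  simp_rw [integral_exp_inner_mul_I_sub_mul_sub]
  rw [integral_add (by fun_prop) (by fun_prop), integral_sub (by fun_prop) (by fun_prop),
    integral_sub (by fun_prop) (by fun_prop), integral_mul_const, integral_mul_const, integral_const]
  simp only [← charFun_apply, probReal_univ, one_smul]
  ring

lemma norm_charFun_mul_charFun_sub_charFun_add_le (h2 : Integrable (fun x => ‖x‖ ^ 2) μ)
    (s t : E) :
    ‖charFun μ s * charFun μ t - charFun μ (s + t)‖ ≤ 2 * ‖s‖ * ‖t‖ * ∫ x, ‖x‖ ^ 2 ∂μ := by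
  set m := ∫ x, ‖x‖ ^ 2 ∂μ
  have hpoint : ∀ v w : E, ‖(exp (⟪v, s⟫_ℝ * I) - exp (⟪w, s⟫_ℝ * I))
      * (exp (⟪w, t⟫_ℝ * I) - exp (⟪v, t⟫_ℝ * I))‖ ≤ 2 * ‖s‖ * ‖t‖ * (‖v‖ ^ 2 + ‖w‖ ^ 2) := by
    intro v w
    have hvw : ‖v - w‖ ^ 2 ≤ 2 * (‖v‖ ^ 2 + ‖w‖ ^ 2) := by
      nlinarith [norm_sub_le v w, norm_nonneg (v - w), sq_nonneg (‖v‖ - ‖w‖)]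
    calc _ ≤ (‖s‖ * ‖v - w‖) * (‖t‖ * ‖w - v‖) := by
          rw [norm_mul]
          exact mul_le_mul (norm_exp_inner_mul_I_sub_le v w s) (norm_exp_inner_mul_I_sub_le w v t)
            (norm_nonneg _) (by positivity)
      _ = ‖s‖ * ‖t‖ * ‖v - w‖ ^ 2 := by rw [norm_sub_rev w v]; ring
      _ ≤ ‖s‖ * ‖t‖ * (2 * (‖v‖ ^ 2 + ‖w‖ ^ 2)) := by gcongr
      _ = 2 * ‖s‖ * ‖t‖ * (‖v‖ ^ 2 + ‖w‖ ^ 2) := by ring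
  have hinner : ∀ v : E, ‖∫ w, (exp (⟪v, s⟫_ℝ * I) - exp (⟪w, s⟫_ℝ * I))
      * (exp (⟪w, t⟫_ℝ * I) - exp (⟪v, t⟫_ℝ * I)) ∂μ‖ ≤ 2 * ‖s‖ * ‖t‖ * (‖v‖ ^ 2 + m) := by
    intro v
    calc _ ≤ ∫ w, 2 * ‖s‖ * ‖t‖ * (‖v‖ ^ 2 + ‖w‖ ^ 2) ∂μ :=
          norm_integral_le_of_norm_le (by fun_prop) (.of_forall (hpoint v))
      _ = 2 * ‖s‖ * ‖t‖ * (‖v‖ ^ 2 + m) := by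
          rw [integral_const_mul, integral_add (integrable_const _) h2, integral_const]
          simp [m]
  have houter : 2 * ‖charFun μ s * charFun μ t - charFun μ (s + t)‖
      ≤ 2 * ‖s‖ * ‖t‖ * (m + m) := by
    calc 2 * ‖charFun μ s * charFun μ t - charFun μ (s + t)‖
        = ‖∫ v, ∫ w, (exp (⟪v, s⟫_ℝ * I) - exp (⟪w, s⟫_ℝ * I))
            * (exp (⟪w, t⟫_ℝ * I) - exp (⟪v, t⟫_ℝ * I)) ∂μ ∂μ‖ := by
          rw [integral_integral_exp_inner_mul_I_sub_mul_sub, norm_mul, Complex.norm_two]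
      _ ≤ ∫ v, 2 * ‖s‖ * ‖t‖ * (‖v‖ ^ 2 + m) ∂μ :=
          norm_integral_le_of_norm_le (by fun_prop) (.of_forall hinner)
      _ = 2 * ‖s‖ * ‖t‖ * (m + m) := by
          rw [integral_const_mul, integral_add h2 (integrable_const _), integral_const]
          simp [m]
  linarith

end CharFun

section Geometry

open scoped InnerProductSpace

variable {E : Type*} [NormedAddCommGroup E] [InnerProductSpace ℝ E] {ξ σ : E}

lemma inner_div_norm_le_one (hσ : ‖σ‖ = 1) : ⟪σ, ξ⟫_ℝ / ‖ξ‖ ≤ 1 := by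
  refine div_le_one_of_le₀ ?_ (norm_nonneg ξ)
  simpa [hσ] using real_inner_le_norm σ ξ

lemma norm_add_norm_smul_le (hσ : ‖σ‖ = 1) : ‖ξ + ‖ξ‖ • σ‖ ≤ 2 * ‖ξ‖ := by
  calc ‖ξ + ‖ξ‖ • σ‖ ≤ ‖ξ‖ + ‖‖ξ‖ • σ‖ := norm_add_le _ _
    _ = 2 * ‖ξ‖ := by rw [norm_smul, hσ, norm_norm]; ring

-- At `ξ = 0` both sides vanish, the division by `‖ξ‖ = 0` included.
lemma norm_sub_norm_smul_sq (hσ : ‖σ‖ = 1) :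
    ‖ξ - ‖ξ‖ • σ‖ ^ 2 = 2 * ‖ξ‖ ^ 2 * (1 - ⟪σ, ξ⟫_ℝ / ‖ξ‖) := by
  rw [norm_sub_sq_real, inner_smul_right, norm_smul, hσ, norm_norm, real_inner_comm]
  rcases eq_or_ne ‖ξ‖ 0 with h | h
  · simp [h]
  · field_simp
    ring

lemma norm_sub_norm_smul_le (hσ : ‖σ‖ = 1) :
    ‖ξ - ‖ξ‖ • σ‖ ≤ 2 * ‖ξ‖ * √(1 - ⟪σ, ξ⟫_ℝ / ‖ξ‖) := by
  have hc := sub_nonneg.2 (inner_div_norm_le_one (ξ := ξ) hσ)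
  rw [← pow_le_pow_iff_left₀ (norm_nonneg _) (by positivity) two_ne_zero,
    norm_sub_norm_smul_sq hσ, mul_pow, Real.sq_sqrt hc]
  nlinarith [mul_nonneg (sq_nonneg ‖ξ‖) hc]

lemma norm_half_add_mul_norm_half_sub_le (hσ : ‖σ‖ = 1) :
    ‖(1 / 2 : ℝ) • (ξ + ‖ξ‖ • σ)‖ * ‖(1 / 2 : ℝ) • (ξ - ‖ξ‖ • σ)‖
      ≤ ‖ξ‖ ^ 2 * √(1 - ⟪σ, ξ⟫_ℝ / ‖ξ‖) := by
  rw [norm_smul, norm_smul, Real.norm_of_nonneg (by norm_num : (0 : ℝ) ≤ 1 / 2)]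
  calc 1 / 2 * ‖ξ + ‖ξ‖ • σ‖ * (1 / 2 * ‖ξ - ‖ξ‖ • σ‖)
      ≤ 1 / 2 * (2 * ‖ξ‖) * (1 / 2 * (2 * ‖ξ‖ * √(1 - ⟪σ, ξ⟫_ℝ / ‖ξ‖))) := by
        gcongr
        exacts [norm_add_norm_smul_le hσ, norm_sub_norm_smul_le hσ]
    _ = ‖ξ‖ ^ 2 * √(1 - ⟪σ, ξ⟫_ℝ / ‖ξ‖) := by ring

end Geometry

section Moments

variable {d : ℕ} {μ ν : Measure (Vd d)}

lemma momk_two_eq_lintegral_ofReal : momk d 2 μ = ∫⁻ v, ENNReal.ofReal (‖v‖ ^ 2) ∂μ := by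
  refine lintegral_congr fun v => ?_
  rw [ENNReal.ofReal_pow (norm_nonneg v), ofReal_norm]
  rfl

lemma integrable_norm_sq_of_momk_two_ne_top (h : momk d 2 μ ≠ ⊤) :
    Integrable (fun v : Vd d => ‖v‖ ^ 2) μ := by
  rw [momk_two_eq_lintegral_ofReal] at h
  exact (lintegral_ofReal_ne_top_iff_integrable (by fun_prop) (.of_forall fun v => by positivity)).1 h

lemma ofReal_integral_norm_sq_eq_momk_two (h : Integrable (fun v : Vd d => ‖v‖ ^ 2) μ) :
    ENNReal.ofReal (∫ v, ‖v‖ ^ 2 ∂μ) = momk d 2 μ := by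
  rw [ofReal_integral_eq_lintegral_ofReal h (.of_forall fun v => by positivity),
    momk_two_eq_lintegral_ofReal]

lemma integral_norm_sq_add_integral_norm_sq_le {M : ℝ} (hM : 0 ≤ M)
    (hμ : Integrable (fun v : Vd d => ‖v‖ ^ 2) μ) (hν : Integrable (fun v : Vd d => ‖v‖ ^ 2) ν)
    (h : momk d 2 μ + momk d 2 ν ≤ ENNReal.ofReal M) :
    (∫ v, ‖v‖ ^ 2 ∂μ) + ∫ v, ‖v‖ ^ 2 ∂ν ≤ M := by
  rwa [← ENNReal.ofReal_le_ofReal_iff hM, ENNReal.ofReal_add (integral_nonneg fun v => by positivity)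
    (integral_nonneg fun v => by positivity), ofReal_integral_norm_sq_eq_momk_two hμ,
    ofReal_integral_norm_sq_eq_momk_two hν]

end Moments

lemma ftM_eq_charFun {d : ℕ} (μ : Measure (Vd d)) (ξ : Vd d) : ftM d μ ξ = charFun μ (-ξ) := by
  simp only [ftM, charFun_apply, inner_neg_right, real_inner_comm ξ]
  congr with v
  push_cast
  ring_nf

theorem bobylev_second_order_remainder_general
    (d : ℕ) (M : ℝ) (hM : 0 < M) :
    ∃ C : ℝ, 0 < C ∧
      ∀ f g : Measure (Vd d), IsProbabilityMeasure f → IsProbabilityMeasure g →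
        (∫ v, v ∂f) = (∫ v, v ∂g) →
        momk d 2 f + momk d 2 g ≤ ENNReal.ofReal M →
        ∀ ξ : Vd d, ξ ≠ 0 → ∀ σ : Vd d, ‖σ‖ = 1 →
          ‖(ftM d f ((1 / 2 : ℝ) • (ξ + ‖ξ‖ • σ)) - ftM d g ((1 / 2 : ℝ) • (ξ + ‖ξ‖ • σ)))
                * (ftM d f ((1 / 2 : ℝ) • (ξ - ‖ξ‖ • σ)) + ftM d g ((1 / 2 : ℝ) • (ξ - ‖ξ‖ • σ)))
              + (ftM d f ((1 / 2 : ℝ) • (ξ - ‖ξ‖ • σ)) - ftM d g ((1 / 2 : ℝ) • (ξ - ‖ξ‖ • σ)))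
                * (ftM d f ((1 / 2 : ℝ) • (ξ + ‖ξ‖ • σ)) + ftM d g ((1 / 2 : ℝ) • (ξ + ‖ξ‖ • σ)))
              - 2 * (ftM d f ξ - ftM d g ξ)‖
            ≤ C * ‖ξ‖ ^ 2 * Real.sqrt (1 - (inner ℝ σ ξ : ℝ) / ‖ξ‖) := by
  refine ⟨4 * M, by positivity, fun f g hf hg _ hmom ξ _ σ hσ => ?_⟩
  set p : Vd d := (1 / 2 : ℝ) • (ξ + ‖ξ‖ • σ)
  set q : Vd d := (1 / 2 : ℝ) • (ξ - ‖ξ‖ • σ)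
  have hpq : -p + -q = -ξ := by simp only [p, q]; module
  have hf2 := integrable_norm_sq_of_momk_two_ne_top
    (ne_top_of_le_ne_top ENNReal.ofReal_ne_top (le_self_add.trans hmom))
  have hg2 := integrable_norm_sq_of_momk_two_ne_top
    (ne_top_of_le_ne_top ENNReal.ofReal_ne_top (le_add_self.trans hmom))
  have hRf := norm_charFun_mul_charFun_sub_charFun_add_le hf2 (-p) (-q)
  have hRg := norm_charFun_mul_charFun_sub_charFun_add_le hg2 (-p) (-q)
  rw [norm_neg, norm_neg, hpq] at hRf hRg
  have hbobylev : ∀ a b c a' b' c' : ℂ, (a - a') * (b + b') + (b - b') * (a + a') - 2 * (c - c')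
      = 2 * ((a * b - c) - (a' * b' - c')) := by intros; ring
  simp only [ftM_eq_charFun, hbobylev]
  calc _ ≤ 2 * (2 * ‖p‖ * ‖q‖ * ∫ v, ‖v‖ ^ 2 ∂f + 2 * ‖p‖ * ‖q‖ * ∫ v, ‖v‖ ^ 2 ∂g) := by
        rw [norm_mul, Complex.norm_two]
        gcongr
        exact (norm_sub_le _ _).trans (add_le_add hRf hRg)
    _ = 4 * ((∫ v, ‖v‖ ^ 2 ∂f) + ∫ v, ‖v‖ ^ 2 ∂g) * (‖p‖ * ‖q‖) := by ring
    _ ≤ 4 * M * (‖ξ‖ ^ 2 * √(1 - inner ℝ σ ξ / ‖ξ‖)) :=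
        mul_le_mul (by linarith [integral_norm_sq_add_integral_norm_sq_le hM.le hf2 hg2 hmom])
          (norm_half_add_mul_norm_half_sub_le hσ) (by positivity) (by positivity)
    _ = _ := by ring

/-- Second-order remainder bound for Bobylev-type combinations of
characteristic functions. -/
theorem bobylev_second_order_remainder
    (d : ℕ) (hd : 2 ≤ d) (M : ℝ) (hM : 0 < M) :
    ∃ C : ℝ, 0 < C ∧
      ∀ f g : Measure (Vd d), IsProbabilityMeasure f → IsProbabilityMeasure g →
        (∫ v, v ∂f) = (∫ v, v ∂g) →
        momk d 2 f + momk d 2 g ≤ ENNReal.ofReal M →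
        ∀ ξ : Vd d, ξ ≠ 0 → ∀ σ : Vd d, ‖σ‖ = 1 →
          ‖(ftM d f ((1 / 2 : ℝ) • (ξ + ‖ξ‖ • σ)) - ftM d g ((1 / 2 : ℝ) • (ξ + ‖ξ‖ • σ)))
                * (ftM d f ((1 / 2 : ℝ) • (ξ - ‖ξ‖ • σ)) + ftM d g ((1 / 2 : ℝ) • (ξ - ‖ξ‖ • σ)))
              + (ftM d f ((1 / 2 : ℝ) • (ξ - ‖ξ‖ • σ)) - ftM d g ((1 / 2 : ℝ) • (ξ - ‖ξ‖ • σ)))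
                * (ftM d f ((1 / 2 : ℝ) • (ξ + ‖ξ‖ • σ)) + ftM d g ((1 / 2 : ℝ) • (ξ + ‖ξ‖ • σ)))
              - 2 * (ftM d f ξ - ftM d g ξ)‖
            ≤ C * ‖ξ‖ ^ 2 * Real.sqrt (1 - (inner ℝ σ ξ : ℝ) / ‖ξ‖) :=
  bobylev_second_order_remainder_general d M hM

end
end
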